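/- Let q be an odd prime power, g ≥ 1, and let P_1,…,P_k be distinct prime polynomials in 𝔽_q[x] with f = P_1 P_2 ⋯ P_k. Then 1 − (q/(q−1)) Σ_{j=1}^k q^{−deg P_j} ≤ ⟨χ_Q(f²)⟩ ≤ 1; in particular ⟨χ_Q(f²)⟩ = 1 + O(Σ_{P | f} 1/|P|) with |P| = q^{deg P}. -/

import Mathlib

open Polynomial UniqueFactorizationMonoid
open scoped Classical

/-- Quadratic residue symbol `(D/P)` for `P` a prime polynomial. -/
noncomputable def resSym {F : Type*} [Field F] (D P : Polynomial F) : ℤ :=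
  if P ∣ D then 0 else if ∃ h : Polynomial F, P ∣ (h ^ 2 - D) then 1 else -1

/-- Jacobi symbol `(D/f)`. -/
noncomputable def jacSym {F : Type*} [Field F] (D f : Polynomial F) : ℤ :=
  ((normalizedFactors f).map fun P => resSym D P).prod

/-- Möbius function of 𝔽_q[x]. -/
noncomputable def moeb {F : Type*} [Field F] (A : Polynomial F) : ℤ :=
  if Squarefree A then (-1) ^ Multiset.card (normalizedFactors A) else 0

/-- Von Mangoldt function of 𝔽_q[x]. -/
noncomputable def vonM {F : Type*} [Field F] (f : Polynomial F) : ℝ :=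
  if h : ∃ P : Polynomial F, P.Monic ∧ Irreducible P ∧ ∃ j : ℕ, 0 < j ∧ f = P ^ j
  then ((h.choose.natDegree : ℕ) : ℝ) else 0

/-- Monic squarefree polynomials of degree `d`. -/
def Hset (F : Type*) [Field F] (d : ℕ) : Set (Polynomial F) :=
  {Q | Q.Monic ∧ Squarefree Q ∧ Q.natDegree = d}

/-- Monic polynomials of degree `d`. -/
def Mset (F : Type*) [Field F] (d : ℕ) : Set (Polynomial F) :=
  {f | f.Monic ∧ f.natDegree = d}

/-- The average over the hyperelliptic ensemble `H_{2g+1}`. -/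
noncomputable def avgH (F : Type*) [Field F] [Fintype F] (g : ℕ) (Φ : Polynomial F → ℝ) : ℝ :=
  (∑ᶠ Q ∈ Hset F (2 * g + 1), Φ Q) /
    (((Fintype.card F : ℝ) - 1) * (Fintype.card F : ℝ) ^ (2 * g))

/-- `t_k(Q)`, the trace of the k-th power of the unitarized Frobenius class. -/
noncomputable def trFrob (F : Type*) [Field F] [Fintype F] (k : ℕ) (Q : Polynomial F) : ℝ :=
  -((Fintype.card F : ℝ) ^ ((k : ℝ) / 2))⁻¹ *
    ∑ᶠ f ∈ Mset F k, vonM f * (jacSym Q f : ℝ)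

def eta (k : ℕ) : ℝ := if Even k then 1 else 0

/-! `χ_Q(f²) = ∏_j (Q/P_j)²` is `1` when `Q` is prime to every `P_j` and `0` otherwise, so the
average is the proportion of `Q ∈ H_{2g+1}` coprime to `f`, which is at most `1`. The others are
multiples of some `P_j`, and there are at most `q^{2g+1-deg P_j}` monic multiples of `P_j` of
degree `2g+1`. Dividing by `#H_{2g+1} = (q-1)q^{2g}` gives the lower bound; that count comes from
writing every monic polynomial uniquely as `a²b` with `b` squarefree, which gives
`q^n = Σ_d q^d · #H_{n-2d}`. -/

open Finset

section Monics

variable (F : Type*) [Field F] [Fintype F]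

noncomputable def monicsOfDegree (n : ℕ) : Finset F[X] :=
  univ.image fun c : Fin n → F => X ^ n + ((degreeLTEquiv F n).symm c : F[X])

noncomputable def squarefreeMonicsOfDegree (n : ℕ) : Finset F[X] :=
  (monicsOfDegree F n).filter Squarefree

variable {F}

lemma mem_monicsOfDegree {n : ℕ} {p : F[X]} :
    p ∈ monicsOfDegree F n ↔ p.Monic ∧ p.natDegree = n := by
  simp only [monicsOfDegree, mem_image, mem_univ, true_and]
  constructor
  · rintro ⟨c, rfl⟩
    have hlt : ((degreeLTEquiv F n).symm c : F[X]).degree < (X ^ n : F[X]).degree := by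
      rw [degree_X_pow]
      exact mem_degreeLT.1 ((degreeLTEquiv F n).symm c).2
    exact ⟨(monic_X_pow n).add_of_left hlt,
      by rw [natDegree_add_eq_left_of_degree_lt hlt, natDegree_X_pow]⟩
  · rintro ⟨hm, rfl⟩
    have hdeg : p.degree = (X ^ p.natDegree : F[X]).degree := by
      rw [degree_X_pow, degree_eq_natDegree hm.ne_zero]
    have hlt : p - X ^ p.natDegree ∈ degreeLT F p.natDegree := by
      rw [mem_degreeLT]
      calc (p - X ^ p.natDegree).degree < p.degree :=
            degree_sub_lt_left hdeg hm.ne_zero (by rw [hm.leadingCoeff, leadingCoeff_X_pow])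
        _ = p.natDegree := degree_eq_natDegree hm.ne_zero
    exact ⟨degreeLTEquiv F _ ⟨_, hlt⟩, by simp⟩

lemma card_monicsOfDegree (n : ℕ) : #(monicsOfDegree F n) = Fintype.card F ^ n := by
  rw [monicsOfDegree, card_image_of_injective, card_univ, Fintype.card_fun, Fintype.card_fin]
  intro c c' h
  exact (degreeLTEquiv F n).symm.injective (Subtype.ext (add_left_cancel h))

lemma mem_squarefreeMonicsOfDegree {n : ℕ} {p : F[X]} :
    p ∈ squarefreeMonicsOfDegree F n ↔ p.Monic ∧ Squarefree p ∧ p.natDegree = n := by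
  rw [squarefreeMonicsOfDegree, mem_filter, mem_monicsOfDegree]
  tauto

lemma coe_squarefreeMonicsOfDegree (n : ℕ) :
    (squarefreeMonicsOfDegree F n : Set F[X]) = Hset F n := by
  ext p
  exact mem_squarefreeMonicsOfDegree

end Monics

theorem UniqueFactorizationMonoid.associated_of_sq_mul_eq_sq_mul {α : Type*}
    [CommMonoidWithZero α] [Nontrivial α] [NormalizationMonoid α] [UniqueFactorizationMonoid α]
    {a b c d : α} (ha : a ≠ 0) (hb : Squarefree b) (hd : Squarefree d)
    (h : a ^ 2 * b = c ^ 2 * d) :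
    Associated a c := by
  have hc : c ≠ 0 := by
    rintro rfl
    simp [ha, hb.ne_zero] at h
  have count_eq (x y : α) (hx : x ≠ 0) (hy : Squarefree y) (p : α) :
      (normalizedFactors (x ^ 2 * y)).count p =
        2 * (normalizedFactors x).count p + (normalizedFactors y).count p := by
    rw [normalizedFactors_mul (pow_ne_zero _ hx) hy.ne_zero, normalizedFactors_pow,
      Multiset.count_add, Multiset.count_nsmul]
  have count_le_one (y : α) (hy : Squarefree y) (p : α) : (normalizedFactors y).count p ≤ 1 :=
    Multiset.nodup_iff_count_le_one.1 ((squarefree_iff_nodup_normalizedFactors hy.ne_zero).1 hy) p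
  refine (associated_iff_normalizedFactors_eq_normalizedFactors ha hc).2 <|
    Multiset.ext.2 fun p => ?_
  have := count_eq a b ha hb p
  rw [h, count_eq c d hc hd p] at this
  have := count_le_one b hb p
  have := count_le_one d hd p
  omega

namespace Polynomial

variable {F : Type*} [Field F]

theorem Monic.exists_sq_mul_squarefree {f : F[X]} (hf : f.Monic) :
    ∃ a b : F[X], a.Monic ∧ b.Monic ∧ Squarefree b ∧ f = a ^ 2 * b := by
  induction hn : f.natDegree using Nat.strong_induction_on generalizing f with
  | _ n ih =>
  by_cases hsf : Squarefree f
  · exact ⟨1, f, monic_one, hf, hsf, by ring⟩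
  obtain ⟨p, hp, hpf⟩ : ∃ p : F[X], Irreducible p ∧ p * p ∣ f := by
    by_contra! hno
    exact hsf (((irreducible_sq_not_dvd_iff_eq_zero_and_no_irreducibles_or_squarefree f).1
      hno).resolve_left fun h => hf.ne_zero h.1)
  have hpm : (normalize p).Monic := monic_normalize hp.ne_zero
  obtain ⟨r, rfl⟩ : normalize p ^ 2 ∣ f := by
    rw [sq, ← normalize_mul]
    exact normalize_dvd_iff.2 hpf
  have hrm : r.Monic := (hpm.pow 2).of_mul_monic_left hf
  have hlt : r.natDegree < n := by
    rw [← hn, (hpm.pow 2).natDegree_mul hrm, Polynomial.natDegree_pow]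
    have := (associated_normalize p).irreducible hp |>.natDegree_pos
    omega
  obtain ⟨a, b, ha, hb, hbsf, rfl⟩ := ih _ hlt hrm rfl
  exact ⟨normalize p * a, b, hpm.mul ha, hb, hbsf, by ring⟩

theorem eq_and_eq_of_sq_mul_eq_sq_mul {a b c d : F[X]} (ha : a.Monic) (hc : c.Monic)
    (hb : Squarefree b) (hd : Squarefree d) (h : a ^ 2 * b = c ^ 2 * d) : a = c ∧ b = d := by
  obtain rfl : a = c := eq_of_monic_of_associated ha hc
    (UniqueFactorizationMonoid.associated_of_sq_mul_eq_sq_mul ha.ne_zero hb hd h)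
  exact ⟨rfl, mul_left_cancel₀ (pow_ne_zero 2 ha.ne_zero) h⟩

end Polynomial

section Counting

variable {F : Type*} [Field F] [Fintype F]

lemma card_monicsOfDegree_eq_sum (n : ℕ) :
    Fintype.card F ^ n = ∑ d ∈ range (n / 2 + 1),
      Fintype.card F ^ d * #(squarefreeMonicsOfDegree F (n - 2 * d)) := by
  have hbij : #((range (n / 2 + 1)).sigma fun d =>
      monicsOfDegree F d ×ˢ squarefreeMonicsOfDegree F (n - 2 * d)) = #(monicsOfDegree F n) := by
    have natDegree_sq_mul {a b : F[X]} (ha : a.Monic) (hb : b.Monic) :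
        (a ^ 2 * b).natDegree = 2 * a.natDegree + b.natDegree := by
      rw [(ha.pow 2).natDegree_mul hb, natDegree_pow]
    refine card_bij (fun x _ => x.2.1 ^ 2 * x.2.2) ?_ ?_ ?_
    · rintro ⟨d, a, b⟩ hx
      simp only [mem_sigma, mem_range, mem_product, mem_monicsOfDegree,
        mem_squarefreeMonicsOfDegree] at hx ⊢
      obtain ⟨hd, ⟨ha, rfl⟩, hb, -, hbd⟩ := hx
      exact ⟨(ha.pow 2).mul hb, by rw [natDegree_sq_mul ha hb]; omega⟩
    · rintro ⟨d, a, b⟩ hx ⟨d', a', b'⟩ hx' h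
      simp only [mem_sigma, mem_product, mem_monicsOfDegree,
        mem_squarefreeMonicsOfDegree] at hx hx'
      obtain ⟨-, ⟨ha, rfl⟩, -, hb, -⟩ := hx
      obtain ⟨-, ⟨ha', rfl⟩, -, hb', -⟩ := hx'
      obtain ⟨rfl, rfl⟩ := eq_and_eq_of_sq_mul_eq_sq_mul ha ha' hb hb' h
      rfl
    · intro p hp
      obtain ⟨hpm, rfl⟩ := mem_monicsOfDegree.1 hp
      obtain ⟨a, b, ha, hb, hbsf, rfl⟩ := hpm.exists_sq_mul_squarefree
      refine ⟨⟨a.natDegree, a, b⟩, ?_, rfl⟩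
      simp only [mem_sigma, mem_range, mem_product, mem_monicsOfDegree,
        mem_squarefreeMonicsOfDegree, natDegree_sq_mul ha hb, and_true]
      exact ⟨by omega, ha, hb, hbsf, by omega⟩
  rw [← card_monicsOfDegree, ← hbij, card_sigma]
  simp only [card_product, card_monicsOfDegree]

lemma card_squarefreeMonicsOfDegree {n : ℕ} (hn : 2 ≤ n) :
    (#(squarefreeMonicsOfDegree F n) : ℝ) =
      (Fintype.card F - 1) * (Fintype.card F : ℝ) ^ (n - 1) := by
  obtain ⟨m, rfl⟩ : ∃ m, n = m + 2 := ⟨n - 2, by omega⟩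
  set q := Fintype.card F
  -- the terms `d ≥ 1` of the identity for `m + 2` are `q` times the identity for `m`
  have key : q ^ (m + 2) = #(squarefreeMonicsOfDegree F (m + 2)) + q * q ^ m := by
    rw [card_monicsOfDegree_eq_sum (m + 2), sum_range_succ', card_monicsOfDegree_eq_sum m,
      mul_sum, show (m + 2) / 2 = m / 2 + 1 by omega, add_comm]
    congr 1
    · simp
    · refine sum_congr rfl fun d _ => ?_
      rw [show m + 2 - 2 * (d + 1) = m - 2 * d by omega, pow_succ]
      ring
  have keyR : (q : ℝ) ^ (m + 2) = #(squarefreeMonicsOfDegree F (m + 2)) + q * q ^ m := by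
    exact_mod_cast key
  rw [show m + 2 - 1 = m + 1 by omega]
  linear_combination -keyR

lemma card_filter_dvd_le {P : F[X]} (hP : P.Monic) (n : ℕ) :
    (#((monicsOfDegree F n).filter (P ∣ ·)) : ℝ) ≤
      (Fintype.card F : ℝ) ^ n / (Fintype.card F : ℝ) ^ P.natDegree := by
  have hq : (0 : ℝ) < Fintype.card F := by exact_mod_cast Fintype.card_pos
  by_cases hle : P.natDegree ≤ n
  · have hsub : (monicsOfDegree F n).filter (P ∣ ·) ⊆
        (monicsOfDegree F (n - P.natDegree)).image (P * ·) := by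
      intro Q hQ
      simp only [mem_filter, mem_monicsOfDegree] at hQ
      obtain ⟨⟨hQm, rfl⟩, R, rfl⟩ := hQ
      have hR : R.Monic := hP.of_mul_monic_left hQm
      refine mem_image.2 ⟨R, mem_monicsOfDegree.2 ⟨hR, ?_⟩, rfl⟩
      rw [hP.natDegree_mul hR]
      omega
    calc (#((monicsOfDegree F n).filter (P ∣ ·)) : ℝ)
        ≤ #(monicsOfDegree F (n - P.natDegree)) := by
          exact_mod_cast (card_le_card hsub).trans card_image_le
      _ = (Fintype.card F : ℝ) ^ n / (Fintype.card F : ℝ) ^ P.natDegree := by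
          rw [card_monicsOfDegree, eq_div_iff (by positivity)]
          push_cast
          rw [← pow_add, Nat.sub_add_cancel hle]
  · have hempty : (monicsOfDegree F n).filter (P ∣ ·) = ∅ := by
      refine filter_eq_empty_iff.2 fun Q hQ hdvd => hle ?_
      obtain ⟨hQm, rfl⟩ := mem_monicsOfDegree.1 hQ
      exact natDegree_le_of_dvd hdvd hQm.ne_zero
    rw [hempty, card_empty, Nat.cast_zero]
    positivity

end Counting

lemma resSym_sq {F : Type*} [Field F] (D P : F[X]) :
    resSym D P ^ 2 = if ¬ P ∣ D then 1 else 0 := by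
  unfold resSym
  split_ifs <;> norm_num

lemma jacSym_prod_sq {F ι : Type*} [Field F] (D : F[X]) (s : Finset ι) (P : ι → F[X])
    (hP : ∀ i ∈ s, (P i).Monic ∧ Irreducible (P i)) :
    jacSym D ((∏ i ∈ s, P i) ^ 2) = if ∀ i ∈ s, ¬ P i ∣ D then 1 else 0 := by
  have hnf : normalizedFactors (∏ i ∈ s, P i) = s.val.map P := by
    rw [prod_eq_multiset_prod, normalizedFactors_prod_eq _ (by simpa using fun i hi => (hP i hi).2),
      Multiset.map_map]
    exact Multiset.map_congr rfl fun i hi => (hP i hi).1.normalize_eq_self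
  rw [jacSym, normalizedFactors_pow, hnf, Multiset.map_nsmul, Multiset.prod_nsmul, Multiset.map_map]
  change (∏ i ∈ s, resSym D (P i)) ^ 2 = _
  simp only [← prod_pow, resSym_sq, prod_boole]

section Average

variable {F ι : Type*} [Field F] [Fintype F]

lemma avgH_jacSym_prod_sq_eq_card_div {g : ℕ} (hg : 1 ≤ g) (s : Finset ι) (P : ι → F[X])
    (hP : ∀ i ∈ s, (P i).Monic ∧ Irreducible (P i)) :
    avgH F g (fun Q => (jacSym Q ((∏ i ∈ s, P i) ^ 2) : ℝ)) =
      #((squarefreeMonicsOfDegree F (2 * g + 1)).filter fun Q => ∀ i ∈ s, ¬ P i ∣ Q) /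
        #(squarefreeMonicsOfDegree F (2 * g + 1)) := by
  rw [avgH, ← coe_squarefreeMonicsOfDegree, finsum_mem_coe_finset,
    card_squarefreeMonicsOfDegree (by omega), Nat.add_sub_cancel]
  simp only [jacSym_prod_sq _ _ _ hP, Int.cast_ite, Int.cast_one, Int.cast_zero, sum_boole]

lemma card_le_card_filter_coprime_add {n : ℕ} {S : Finset F[X]} (hS : S ⊆ monicsOfDegree F n)
    (s : Finset ι) (P : ι → F[X]) (hP : ∀ i ∈ s, (P i).Monic) :
    (#S : ℝ) ≤ #(S.filter fun Q => ∀ i ∈ s, ¬ P i ∣ Q) +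
      (Fintype.card F : ℝ) ^ n *
        ∑ i ∈ s, ((Fintype.card F : ℝ) ^ (P i).natDegree)⁻¹ := by
  have hcover : S ⊆ S.filter (fun Q => ∀ i ∈ s, ¬ P i ∣ Q) ∪
      s.biUnion fun i => (monicsOfDegree F n).filter (P i ∣ ·) := by
    intro Q hQ
    by_cases h : ∀ i ∈ s, ¬ P i ∣ Q
    · exact mem_union_left _ (mem_filter.2 ⟨hQ, h⟩)
    · push Not at h
      obtain ⟨i, hi, hdvd⟩ := h
      exact mem_union_right _ (mem_biUnion.2 ⟨i, hi, mem_filter.2 ⟨hS hQ, hdvd⟩⟩)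
  calc (#S : ℝ)
      ≤ #(S.filter fun Q => ∀ i ∈ s, ¬ P i ∣ Q) +
          ∑ i ∈ s, (#((monicsOfDegree F n).filter (P i ∣ ·)) : ℝ) := by
        exact_mod_cast (card_le_card hcover).trans
          ((card_union_le _ _).trans (Nat.add_le_add_left card_biUnion_le _))
    _ ≤ _ := by
        rw [mul_sum]
        gcongr with i hi
        exact card_filter_dvd_le (hP i hi) n

theorem avgH_jacSym_prod_sq_mem_Icc {g : ℕ} (hg : 1 ≤ g) (s : Finset ι) (P : ι → F[X])
    (hP : ∀ i ∈ s, (P i).Monic ∧ Irreducible (P i)) :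
    avgH F g (fun Q => (jacSym Q ((∏ i ∈ s, P i) ^ 2) : ℝ)) ∈ Set.Icc
      (1 - (Fintype.card F : ℝ) / (Fintype.card F - 1) *
        ∑ i ∈ s, ((Fintype.card F : ℝ) ^ (P i).natDegree)⁻¹) 1 := by
  set H := squarefreeMonicsOfDegree F (2 * g + 1)
  have hH : (#H : ℝ) = (Fintype.card F - 1) * Fintype.card F ^ (2 * g) :=
    card_squarefreeMonicsOfDegree (by omega)
  have hq : (0 : ℝ) < Fintype.card F - 1 := sub_pos.2 (by exact_mod_cast Fintype.one_lt_card)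
  have hHpos : (0 : ℝ) < #H := by
    rw [hH]
    positivity
  have hweight :
      (Fintype.card F : ℝ) / (Fintype.card F - 1) * #H = Fintype.card F ^ (2 * g + 1) := by
    rw [hH, pow_succ]
    field_simp
  have hcover :=
    card_le_card_filter_coprime_add (S := H) (filter_subset _ _) s P fun i hi => (hP i hi).1
  rw [avgH_jacSym_prod_sq_eq_card_div hg s P hP]
  refine ⟨?_, div_le_one_of_le₀ (by exact_mod_cast card_filter_le _ _) hHpos.le⟩
  rw [← hweight] at hcover
  rw [le_div_iff₀ hHpos]
  linarith

end Average

theorem stmt4_general (q : ℕ) (F : Type*) [Field F] [Fintype F]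
    (hF : Fintype.card F = q) (g : ℕ) (hg : 1 ≤ g) (k : ℕ)
    (P : Fin k → Polynomial F)
    (hP : ∀ j, (P j).Monic ∧ Irreducible (P j)) (f : Polynomial F) (hf : f = ∏ j, P j) :
    1 - ((q : ℝ) / ((q : ℝ) - 1)) * ∑ j, ((q : ℝ) ^ (P j).natDegree)⁻¹ ≤
        avgH F g (fun Q => (jacSym Q (f ^ 2) : ℝ)) ∧
      avgH F g (fun Q => (jacSym Q (f ^ 2) : ℝ)) ≤ 1 := by
  subst hf hF
  exact avgH_jacSym_prod_sq_mem_Icc hg univ P fun j _ => hP j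

/-- Lemma 3.2: for `f = P_1 ⋯ P_k` a product of distinct primes,
`1 - (q/(q-1)) Σ_j q^{-deg P_j} ≤ ⟨χ_Q(f²)⟩ ≤ 1`. -/
theorem stmt4 (q : ℕ) (hq : Odd q) (F : Type*) [Field F] [Fintype F]
    (hF : Fintype.card F = q) (g : ℕ) (hg : 1 ≤ g) (k : ℕ) (hk : 1 ≤ k)
    (P : Fin k → Polynomial F) (hinj : Function.Injective P)
    (hP : ∀ j, (P j).Monic ∧ Irreducible (P j)) (f : Polynomial F) (hf : f = ∏ j, P j) :
    1 - ((q : ℝ) / ((q : ℝ) - 1)) * ∑ j, ((q : ℝ) ^ (P j).natDegree)⁻¹ ≤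
        avgH F g (fun Q => (jacSym Q (f ^ 2) : ℝ)) ∧
      avgH F g (fun Q => (jacSym Q (f ^ 2) : ℝ)) ≤ 1 :=
  stmt4_general q F hF g hg k P hP f hf
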